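/- arXiv:math/0702177 — 5 statements merged into one kernel-verified Lean document; each statement's English description precedes it below -/
import Mathlib

section
/- Let (W,S) be a Coxeter system with S = {s_0, s_1, ..., s_n}, where (s_i s_j)^{m_{ij}} = e with m_{ii}=2. Then the alternating subgroup W^+ = ker(ε), where ε is the sign character sending each s∈S to -1, is generated by the elements r_i = s_0 s_i for i = 1,...,n, and has the presentation ⟨r_1,...,r_n : r_i^{m_{0i}} = e for all i, (r_i^{-1} r_j)^{m_{ij}} = e for 1 ≤ i < j ≤ n⟩. -/
/-!
Since `(s₀sᵢ)⁻¹(s₀sⱼ) = sᵢsⱼ`, the assignment `rᵢ ↦ s₀sᵢ` respects the relations and its image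
contains every product `sᵢsⱼ`, hence all of `W⁺`. For injectivity, let `G` be the presented group
and `σ` its automorphism inverting the generators. In the holomorph `G ⋊ Aut G` the elements
`(gᵢ, σ)` with `g₀ = 1`, `gᵢ = rᵢ⁻¹` satisfy the Coxeter relations, because
`(gᵢ, σ)(gⱼ, σ) = (gᵢgⱼ⁻¹, 1)`. The induced `ψ : W → G ⋊ Aut G` sends `s₀sᵢ` to `(rᵢ, 1)`, so `ψ`
composed with `rᵢ ↦ s₀sᵢ` is the inclusion of `G`.
-/

open CoxeterSystem

namespace AltCox

variable {W : Type*} [Group W]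

/-- Word length of `w` with respect to a generating set `A`:
the minimum length of a word in `A` whose product is `w`. -/
noncomputable def glen (A : Set W) (w : W) : ℕ :=
  sInf {k | ∃ l : List W, (∀ x ∈ l, x ∈ A) ∧ l.prod = w ∧ l.length = k}

variable {n : ℕ} {M : CoxeterMatrix (Fin (n + 1))} (cs : CoxeterSystem M W)

/-- The alternating subgroup `W⁺`: the kernel of the sign character, i.e. the
set of elements of even Coxeter length. -/
def alt : Subgroup W where
  carrier := {w | Even (cs.length w)}
  one_mem' := by simp [Nat.even_iff]
  mul_mem' := by
    intro a b ha hb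
    simp only [Set.mem_setOf_eq, Nat.even_iff] at *
    have := cs.length_mul_mod_two a b
    omega
  inv_mem' := by
    intro a ha
    simpa [cs.length_inv] using ha

/-- The generating set `R = {r_i = s₀ sᵢ : i ≠ 0}` of `W⁺`. -/
def Rset : Set W := {x | ∃ i : Fin (n + 1), i ≠ 0 ∧ x = cs.simple 0 * cs.simple i}

/-- The symmetrized generating set `R ∪ R⁻¹`. -/
def Rsym : Set W := Rset cs ∪ (Rset cs)⁻¹

/-- `ν w`: the minimum number of letters different from `s₀` among all words
in the simple reflections whose product is `w`. -/
noncomputable def nu (w : W) : ℕ :=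
  sInf {k | ∃ ω : List (Fin (n + 1)), cs.wordProd ω = w ∧
    (ω.filter (fun i => i ≠ 0)).length = k}

/-- `τ w` is the unique element of `{w, w s₀}` lying in `W⁺`. -/
noncomputable def tau (w : W) : W :=
  if Even (cs.length w) then w else w * cs.simple 0

/-- `s₀` is evenly laced: `m₀ᵢ` is even or infinite (encoded by `0`) for all `i ≠ 0`. -/
def EvenlyLaced (M : CoxeterMatrix (Fin (n + 1))) : Prop :=
  ∀ i : Fin (n + 1), i ≠ 0 → Even (M 0 i)

/-- The set of all reflections of `(W, S)`. -/
def Tall : Set W := {t | cs.IsReflection t}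

/-- The set `T̂` of reflections conjugate to some simple reflection other than `s₀`. -/
def That : Set W := {t | ∃ w : W, ∃ i : Fin (n + 1), i ≠ 0 ∧ t = w * cs.simple i * w⁻¹}

/-- The set of odd palindromes of `W⁺` with respect to `R`. -/
def Palin : Set W :=
  {p | ∃ l : List W, (∀ x ∈ l, x ∈ Rsym cs) ∧ Odd l.length ∧ l.reverse = l ∧ l.prod = p}

/-- The set of left-shortening palindromes of `w`. -/
noncomputable def PL (w : W) : Set W :=
  {p ∈ Palin cs | glen (Rsym cs) (p * w) < glen (Rsym cs) w}

/-- The set of right-shortening palindromes of `w`. -/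
noncomputable def PR (w : W) : Set W :=
  {p ∈ Palin cs | glen (Rsym cs) (w * p) < glen (Rsym cs) w}

/-- The right weak order on `(W⁺, R)`. -/
noncomputable def rweak (u w : W) : Prop :=
  Relation.ReflTransGen
    (fun a b => ∃ r ∈ Rsym cs, b = a * r ∧
      glen (Rsym cs) b = glen (Rsym cs) a + 1) u w

/-- The left weak order on `(W⁺, R)`. -/
noncomputable def lweak (u w : W) : Prop :=
  Relation.ReflTransGen
    (fun a b => ∃ r ∈ Rsym cs, b = r * a ∧
      glen (Rsym cs) b = glen (Rsym cs) a + 1) u w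

/-- The right strong order on `(W⁺, R)`. -/
noncomputable def rstrong (u w : W) : Prop :=
  Relation.ReflTransGen
    (fun a b => ∃ p ∈ Palin cs, b = a * p ∧
      glen (Rsym cs) a < glen (Rsym cs) b) u w

/-- The left strong order on `(W⁺, R)`. -/
noncomputable def lstrong (u w : W) : Prop :=
  Relation.ReflTransGen
    (fun a b => ∃ p ∈ Palin cs, b = p * a ∧
      glen (Rsym cs) a < glen (Rsym cs) b) u w

/-- The strong Bruhat order on a Coxeter system. -/
noncomputable def bruhatLE {B : Type*} {M' : CoxeterMatrix B} {W' : Type*} [Group W']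
    (cs' : CoxeterSystem M' W') (u w : W') : Prop :=
  Relation.ReflTransGen
    (fun a b => ∃ t, cs'.IsReflection t ∧ b = a * t ∧ cs'.length a < cs'.length b) u w

/-- The right weak order of a Coxeter system. -/
noncomputable def coxRweak {B : Type*} {M' : CoxeterMatrix B} {W' : Type*} [Group W']
    (cs' : CoxeterSystem M' W') (u w : W') : Prop :=
  Relation.ReflTransGen
    (fun a b => ∃ i, b = a * cs'.simple i ∧ cs'.length b = cs'.length a + 1) u w

/-- The standard parabolic subgroup `W_J` for `J ⊆ S`. -/
def parabolic (J : Set (Fin (n + 1))) : Subgroup W :=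
  Subgroup.closure (cs.simple '' J)

/-- The image `τ(J) = {s₀ sᵢ : sᵢ ∈ J, i ≠ 0}` of a subset `J ⊆ S` containing `s₀`. -/
def tauSet (J : Set (Fin (n + 1))) : Set W :=
  {x | ∃ i ∈ J, i ≠ 0 ∧ x = cs.simple 0 * cs.simple i}

/-- The set `W^J` of minimum-length coset representatives for `W/W_J`. -/
def minReps (J : Set (Fin (n + 1))) : Set W :=
  {w | ∀ i ∈ J, cs.length w < cs.length (w * cs.simple i)}


/-- The defining relations of the Bourbaki presentation of `W⁺`:
`rᵢ^{m₀ᵢ} = e` and `(rᵢ⁻¹ rⱼ)^{mᵢⱼ} = e` for `1 ≤ i < j ≤ n`. -/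
def bourbakiRels (M : CoxeterMatrix (Fin (n + 1))) :
    Set (FreeGroup {i : Fin (n + 1) // i ≠ 0}) :=
  {g | (∃ i : {i : Fin (n + 1) // i ≠ 0}, g = (FreeGroup.of i) ^ (M 0 i.1)) ∨
       (∃ i j : {i : Fin (n + 1) // i ≠ 0}, i.1 < j.1 ∧
          g = ((FreeGroup.of i)⁻¹ * FreeGroup.of j) ^ (M i.1 j.1))}
end AltCox

theorem mul_inv_pow_eq_one_of_inv_mul_pow_eq_one {G : Type*} [Group G] {a b : G} {m : ℕ}
    (h : (a⁻¹ * b) ^ m = 1) : (a * b⁻¹) ^ m = 1 := by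
  rw [show a * b⁻¹ = a * (a⁻¹ * b)⁻¹ * a⁻¹ by group, conj_pow, inv_pow, h, inv_one, mul_one,
    mul_inv_cancel]

theorem SemidirectProduct.mk_mul_mk_eq_inl {G : Type*} [Group G] {σ : MulAut G} (hσ : σ * σ = 1)
    (a b : G) : (⟨a, σ⟩ * ⟨b, σ⟩ : G ⋊[MonoidHom.id _] MulAut G) = inl (a * σ b) :=
  SemidirectProduct.ext rfl hσ

theorem CoxeterMatrix.isLiftable_holomorph {B G : Type*} [Group G] {M : CoxeterMatrix B}
    {σ : MulAut G} (hσ : σ * σ = 1) {g : B → G} (hg : ∀ i, σ (g i) = (g i)⁻¹)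
    (hrel : ∀ i j, (g i * (g j)⁻¹) ^ M i j = 1) :
    M.IsLiftable fun i => (⟨g i, σ⟩ : G ⋊[MonoidHom.id _] MulAut G) := by
  intro i j
  rw [SemidirectProduct.mk_mul_mk_eq_inl hσ, hg, ← map_pow, hrel, map_one]

namespace CoxeterSystem

variable {B W : Type*} [Group W] {M : CoxeterMatrix B} (cs : CoxeterSystem M W)

theorem simple_mul_simple_inv_mul_cancel (k i j : B) :
    (cs.simple k * cs.simple i)⁻¹ * (cs.simple k * cs.simple j) = cs.simple i * cs.simple j := by
  rw [mul_inv_rev, cs.inv_simple, cs.inv_simple, mul_assoc, cs.simple_mul_simple_cancel_left]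

theorem wordProd_mem_of_even_length {H : Subgroup W}
    (hH : ∀ i j, cs.simple i * cs.simple j ∈ H) :
    ∀ ω : List B, Even ω.length → cs.wordProd ω ∈ H
  | [], _ => by simp [one_mem]
  | [_], h => by simp at h
  | i :: j :: ω, h => by
    rw [wordProd_cons, wordProd_cons, ← mul_assoc]
    exact mul_mem (hH i j)
      (wordProd_mem_of_even_length hH ω (by simpa [Nat.even_add_one] using h))

theorem mem_of_even_length {H : Subgroup W} (hH : ∀ i j, cs.simple i * cs.simple j ∈ H)
    {w : W} (hw : Even (cs.length w)) : w ∈ H := by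
  obtain ⟨ω, hω, rfl⟩ := cs.exists_isReduced w
  exact cs.wordProd_mem_of_even_length hH ω (hω.eq ▸ hw)

end CoxeterSystem

namespace AltCox

variable {W : Type*} [Group W] {n : ℕ} {M : CoxeterMatrix (Fin (n + 1))} (cs : CoxeterSystem M W)

theorem simple_zero_mul_simple_mem_closure (i : Fin (n + 1)) :
    cs.simple 0 * cs.simple i ∈ Subgroup.closure (Rset cs) := by
  by_cases hi : i = 0
  · rw [hi, cs.simple_mul_simple_self]
    exact one_mem _
  · exact Subgroup.subset_closure ⟨i, hi, rfl⟩

theorem closure_Rset_eq_alt : Subgroup.closure (Rset cs) = alt cs := by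
  refine le_antisymm ((Subgroup.closure_le _).mpr ?_) fun w hw => cs.mem_of_even_length ?_ hw
  · rintro _ ⟨i, -, rfl⟩
    show Even (cs.length (cs.simple 0 * cs.simple i))
    have h := cs.length_mul_mod_two (cs.simple 0) (cs.simple i)
    rw [cs.length_simple, cs.length_simple] at h
    exact Nat.even_iff.mpr h
  · intro i j
    rw [← cs.simple_mul_simple_inv_mul_cancel 0]
    exact mul_mem (inv_mem (simple_zero_mul_simple_mem_closure cs i))
      (simple_zero_mul_simple_mem_closure cs j)

section Presentation

local notation "G" => PresentedGroup (bourbakiRels M)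
local notation "r" => (PresentedGroup.of : {i : Fin (n + 1) // i ≠ 0} → G)

theorem of_pow_eq_one (i : {i : Fin (n + 1) // i ≠ 0}) : r i ^ M 0 i.1 = 1 := by
  have h := PresentedGroup.one_of_mem (rels := bourbakiRels M) (Or.inl ⟨i, rfl⟩)
  rwa [map_pow] at h

theorem inv_of_mul_of_pow_eq_one_of_lt {i j : {i : Fin (n + 1) // i ≠ 0}} (hij : i.1 < j.1) :
    ((r i)⁻¹ * r j) ^ M i.1 j.1 = 1 := by
  have h := PresentedGroup.one_of_mem (rels := bourbakiRels M) (Or.inr ⟨i, j, hij, rfl⟩)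
  rwa [map_pow, map_mul, map_inv] at h

theorem inv_of_mul_of_pow_eq_one (i j : {i : Fin (n + 1) // i ≠ 0}) :
    ((r i)⁻¹ * r j) ^ M i.1 j.1 = 1 := by
  rcases lt_trichotomy i.1 j.1 with h | h | h
  · exact inv_of_mul_of_pow_eq_one_of_lt h
  · rw [Subtype.ext h, inv_mul_cancel, one_pow]
  · rw [← inv_inv ((r i)⁻¹ * r j), mul_inv_rev, inv_inv, inv_pow, M.symmetric,
      inv_of_mul_of_pow_eq_one_of_lt h, inv_one]

theorem of_mul_inv_of_pow_eq_one (i j : {i : Fin (n + 1) // i ≠ 0}) :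
    (r i * (r j)⁻¹) ^ M i.1 j.1 = 1 :=
  mul_inv_pow_eq_one_of_inv_mul_pow_eq_one (inv_of_mul_of_pow_eq_one i j)

/-- `rᵢ ↦ rᵢ⁻¹`, the automorphism that conjugation by `s₀` induces on `W⁺`. -/
def invGens : G →* G :=
  PresentedGroup.toGroup (f := fun i => (r i)⁻¹) <| by
    rintro _ (⟨i, rfl⟩ | ⟨i, j, -, rfl⟩)
    · rw [map_pow, FreeGroup.lift_apply_of, inv_pow, of_pow_eq_one, inv_one]
    · rw [map_pow, map_mul, map_inv, FreeGroup.lift_apply_of, FreeGroup.lift_apply_of, inv_inv]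
      exact of_mul_inv_of_pow_eq_one i j

theorem invGens_of (i : {i : Fin (n + 1) // i ≠ 0}) : invGens (r i) = (r i)⁻¹ :=
  PresentedGroup.toGroup.of _

theorem invGens_comp_invGens : (invGens (M := M)).comp invGens = MonoidHom.id G :=
  PresentedGroup.ext fun i => by
    rw [MonoidHom.comp_apply, invGens_of, map_inv, invGens_of, inv_inv, MonoidHom.id_apply]

def invGensAut : MulAut G :=
  invGens.toMulEquiv invGens invGens_comp_invGens invGens_comp_invGens

theorem invGensAut_mul_self : invGensAut (M := M) * invGensAut = 1 :=
  MulEquiv.ext fun x => DFunLike.congr_fun invGens_comp_invGens x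

def simpleImage (i : Fin (n + 1)) : G :=
  if h : i = 0 then 1 else (r ⟨i, h⟩)⁻¹

theorem invGensAut_simpleImage (i : Fin (n + 1)) :
    invGensAut (simpleImage (M := M) i) = (simpleImage i)⁻¹ := by
  unfold simpleImage
  split
  · rw [map_one, inv_one]
  · exact (map_inv invGens _).trans (congrArg _ (invGens_of _))

theorem simpleImage_mul_inv_pow_eq_one (i j : Fin (n + 1)) :
    (simpleImage (M := M) i * (simpleImage j)⁻¹) ^ M i j = 1 := by
  unfold simpleImage
  by_cases hi : i = 0 <;> by_cases hj : j = 0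
  · rw [dif_pos hi, dif_pos hj, inv_one, mul_one, one_pow]
  · rw [dif_pos hi, dif_neg hj, inv_inv, one_mul, hi]
    exact of_pow_eq_one ⟨j, hj⟩
  · rw [dif_neg hi, dif_pos hj, inv_one, mul_one, inv_pow, hj, M.symmetric,
      of_pow_eq_one ⟨i, hi⟩, inv_one]
  · rw [dif_neg hi, dif_neg hj, inv_inv]
    exact inv_of_mul_of_pow_eq_one ⟨i, hi⟩ ⟨j, hj⟩

noncomputable def toHolomorph : W →* G ⋊[MonoidHom.id _] MulAut G :=
  cs.lift ⟨_, CoxeterMatrix.isLiftable_holomorph invGensAut_mul_self invGensAut_simpleImage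
    simpleImage_mul_inv_pow_eq_one⟩

def bourbakiHom : G →* W :=
  PresentedGroup.toGroup (f := fun i => cs.simple 0 * cs.simple i.1) <| by
    rintro _ (⟨i, rfl⟩ | ⟨i, j, -, rfl⟩)
    · rw [map_pow, FreeGroup.lift_apply_of]
      exact cs.simple_mul_simple_pow 0 i.1
    · rw [map_pow, map_mul, map_inv, FreeGroup.lift_apply_of, FreeGroup.lift_apply_of,
        cs.simple_mul_simple_inv_mul_cancel]
      exact cs.simple_mul_simple_pow i.1 j.1

theorem bourbakiHom_of (i : {i : Fin (n + 1) // i ≠ 0}) :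
    bourbakiHom cs (r i) = cs.simple 0 * cs.simple i.1 :=
  PresentedGroup.toGroup.of _

theorem toHolomorph_comp_bourbakiHom :
    (toHolomorph cs).comp (bourbakiHom cs) = SemidirectProduct.inl :=
  PresentedGroup.ext fun i => by
    rw [MonoidHom.comp_apply, bourbakiHom_of, map_mul, toHolomorph, cs.lift_apply_simple,
      cs.lift_apply_simple, SemidirectProduct.mk_mul_mk_eq_inl invGensAut_mul_self,
      invGensAut_simpleImage, simpleImage, simpleImage, dif_pos rfl, dif_neg i.2, inv_inv, one_mul]

theorem bourbakiHom_injective : Function.Injective (bourbakiHom cs) := by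
  have h : Function.Injective (toHolomorph cs ∘ bourbakiHom cs) := by
    rw [← MonoidHom.coe_comp, toHolomorph_comp_bourbakiHom]
    exact SemidirectProduct.inl_injective
  exact h.of_comp

theorem bourbakiHom_range : (bourbakiHom cs).range = alt cs := by
  rw [MonoidHom.range_eq_map, ← PresentedGroup.closure_range_of, MonoidHom.map_closure,
    ← Set.range_comp, ← closure_Rset_eq_alt cs]
  congr 1
  ext x
  simp only [Set.mem_range, Function.comp_apply, bourbakiHom_of, Rset, Set.mem_ofPred_eq]
  exact ⟨fun ⟨i, hi⟩ => ⟨i.1, i.2, hi.symm⟩, fun ⟨i, hi, hx⟩ => ⟨⟨i, hi⟩, hx.symm⟩⟩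

end Presentation

/-- The alternating subgroup `W⁺` is generated by the elements `rᵢ = s₀ sᵢ`
and has the Bourbaki presentation
`⟨r₁,…,rₙ : rᵢ^{m₀ᵢ} = (rᵢ⁻¹ rⱼ)^{mᵢⱼ} = e⟩`. -/
theorem statement0 :
    Subgroup.closure (Rset cs) = alt cs ∧
    ∃ φ : PresentedGroup (bourbakiRels M) →* W,
      Function.Injective φ ∧ φ.range = alt cs ∧
      ∀ i : {i : Fin (n + 1) // i ≠ 0},
        φ (PresentedGroup.of i) = cs.simple 0 * cs.simple i.1 :=
  ⟨closure_Rset_eq_alt cs, bourbakiHom cs, bourbakiHom_injective cs, bourbakiHom_range cs,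
    bourbakiHom_of cs⟩

end AltCox
end

section
/- Let W = S_n be the symmetric group with Coxeter generators s_i = (i+1, i+2) for i = 0,...,n-2, so s_0 = (1,2). For any permutation w ∈ S_n, the maximum number of occurrences of s_0 in any reduced word for w equals lrmin(w), the number of left-to-right minima of w (positions j ≥ 2 with w(i) > w(j) for all i < j). Consequently, for w ∈ A_n = W^+, ℓ_{R∪R^{-1}}(w) = inv(w) − lrmin(w). -/
/-!
Right multiplication by `sᵢ = (i, i+1)` swaps the entries of `w` in positions `i` and `i+1`.
This changes `inv` by `±1` and `lrmin` by `0` or `1` in the same direction; for `s₀` both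
change by the same `±1`. So `inv - lrmin` is invariant under `s₀` and grows by at most one per
other letter, and every word for `w` has at least `inv w - lrmin w` letters different from `s₀`.
Conversely, the first descent of `w ≠ 1` is either at position `0` or sits at a position that
is not a left-to-right minimum; peeling it off builds a reduced word attaining the bound.

For the alternating subgroup, an even word regroups into letters of `R ∪ R⁻¹` via
`sᵢ sⱼ = (sᵢ s₀)(s₀ sⱼ)`, so there `ℓ_{R ∪ R⁻¹}` is the least number of letters `≠ s₀`.
-/

open CoxeterSystem

namespace AltCox

variable {W : Type*} [Group W]

variable {n : ℕ} {M : CoxeterMatrix (Fin (n + 1))} (cs : CoxeterSystem M W)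

/-- The number of left-to-right minima of a permutation. -/
def lrmin {m : ℕ} (w : Equiv.Perm (Fin (m + 1))) : ℕ :=
  (Finset.univ.filter (fun j : Fin (m + 1) => j ≠ 0 ∧ ∀ i < j, w j < w i)).card

/-- The number of inversions of a permutation. -/
def invNum {m : ℕ} (w : Equiv.Perm (Fin (m + 1))) : ℕ :=
  (Finset.univ.filter (fun p : Fin (m + 1) × Fin (m + 1) => p.1 < p.2 ∧ w p.2 < w p.1)).card

lemma count_add_length_filter_ne {α : Type*} [DecidableEq α] (a : α) (ω : List α) :
    ω.count a + (ω.filter (· ≠ a)).length = ω.length := by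
  induction ω with
  | nil => rfl
  | cons x ω ih =>
    by_cases h : x = a
    · rw [h, List.count_cons_self, List.filter_cons_of_neg (by simp), List.length_cons]
      omega
    · rw [List.count_cons_of_ne h, List.filter_cons_of_pos (by simpa using h), List.length_cons,
        List.length_cons]
      omega

theorem _root_.CoxeterSystem.length_wordProd_mod_two {B : Type*} {M : CoxeterMatrix B}
    (cs : CoxeterSystem M W) (ω : List B) : cs.length (cs.wordProd ω) % 2 = ω.length % 2 := by
  induction ω with
  | nil => simp
  | cons i ω ih =>
    rw [cs.wordProd_cons, cs.length_mul_mod_two, cs.length_simple, List.length_cons]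
    omega

section Alternating

lemma simple_zero_mul_simple_mem_Rsym {i : Fin (n + 1)} (hi : i ≠ 0) :
    cs.simple 0 * cs.simple i ∈ Rsym cs :=
  Or.inl ⟨i, hi, rfl⟩

lemma simple_mul_simple_zero_mem_Rsym {i : Fin (n + 1)} (hi : i ≠ 0) :
    cs.simple i * cs.simple 0 ∈ Rsym cs :=
  Or.inr ⟨i, hi, by simp⟩

lemma exists_Rsym_list_of_even_length : ∀ ω : List (Fin (n + 1)), Even ω.length →
    ∃ l : List W, (∀ x ∈ l, x ∈ Rsym cs) ∧ l.prod = cs.wordProd ω ∧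
      l.length = (ω.filter (fun i => i ≠ 0)).length
  | [], _ => ⟨[], by simp⟩
  | [_], h => by simp at h
  | i :: j :: ω, h => by
    obtain ⟨l, hl, hprod, hlen⟩ :=
      exists_Rsym_list_of_even_length ω (by simpa [parity_simps] using h)
    simp only [cs.wordProd_cons, ← hprod, List.filter_cons]
    by_cases hi : i = 0 <;> by_cases hj : j = 0 <;> subst_vars
    · exact ⟨l, hl, by simp, by simpa using hlen⟩
    · refine ⟨cs.simple 0 * cs.simple j :: l, ?_, by simp [mul_assoc], by simpa [hj] using hlen⟩
      simpa [simple_zero_mul_simple_mem_Rsym cs hj] using hl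
    · refine ⟨cs.simple i * cs.simple 0 :: l, ?_, by simp [mul_assoc], by simpa [hi] using hlen⟩
      simpa [simple_mul_simple_zero_mem_Rsym cs hi] using hl
    · refine ⟨cs.simple i * cs.simple 0 :: cs.simple 0 * cs.simple j :: l, ?_,
        by simp [mul_assoc], by simpa [hi, hj] using hlen⟩
      simpa [simple_zero_mul_simple_mem_Rsym cs hj, simple_mul_simple_zero_mem_Rsym cs hi]
        using hl

lemma exists_word_of_Rsym_list : ∀ l : List W, (∀ x ∈ l, x ∈ Rsym cs) →
    ∃ ω : List (Fin (n + 1)), cs.wordProd ω = l.prod ∧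
      (ω.filter (fun i => i ≠ 0)).length = l.length
  | [], _ => ⟨[], by simp⟩
  | x :: l, hl => by
    obtain ⟨ω, hprod, hlen⟩ := exists_word_of_Rsym_list l (fun y hy => hl y (by simp [hy]))
    rcases hl x (by simp) with ⟨i, hi, rfl⟩ | ⟨i, hi, hx⟩
    · exact ⟨0 :: i :: ω, by simp [cs.wordProd_cons, hprod, mul_assoc], by simpa [hi] using hlen⟩
    · rw [← inv_inj, inv_inv, mul_inv_rev, cs.inv_simple, cs.inv_simple] at hx
      exact ⟨i :: 0 :: ω, by simp [cs.wordProd_cons, hprod, hx, mul_assoc],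
        by simpa [hi] using hlen⟩

lemma nu_le {ω : List (Fin (n + 1))} {w : W} (hω : cs.wordProd ω = w) :
    nu cs w ≤ (ω.filter (fun i => i ≠ 0)).length :=
  Nat.sInf_le ⟨ω, hω, rfl⟩

lemma exists_word_length_filter_eq_nu (w : W) :
    ∃ ω : List (Fin (n + 1)), cs.wordProd ω = w ∧ (ω.filter (fun i => i ≠ 0)).length = nu cs w :=
  have ⟨ω, hω⟩ := cs.wordProd_surjective w
  Nat.sInf_mem (s := {k | ∃ ω : List (Fin (n + 1)), cs.wordProd ω = w ∧
    (ω.filter (fun i => i ≠ 0)).length = k}) ⟨_, ω, hω, rfl⟩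

lemma glen_le {A : Set W} {l : List W} (hl : ∀ x ∈ l, x ∈ A) {w : W} (hw : l.prod = w) :
    glen A w ≤ l.length :=
  Nat.sInf_le ⟨l, hl, hw, rfl⟩

lemma exists_list_length_eq_glen {A : Set W} {l : List W} (hl : ∀ x ∈ l, x ∈ A) {w : W}
    (hw : l.prod = w) : ∃ l' : List W, (∀ x ∈ l', x ∈ A) ∧ l'.prod = w ∧ l'.length = glen A w :=
  Nat.sInf_mem (s := {k | ∃ l : List W, (∀ x ∈ l, x ∈ A) ∧ l.prod = w ∧ l.length = k})
    ⟨_, l, hl, hw, rfl⟩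

theorem glen_Rsym_eq_nu {w : W} (hw : w ∈ alt cs) : glen (Rsym cs) w = nu cs w := by
  obtain ⟨ω, hω, hnu⟩ := exists_word_length_filter_eq_nu cs w
  have heven : Even ω.length := by
    have := cs.length_wordProd_mod_two ω
    rw [hω] at this
    exact Nat.even_iff.2 (this ▸ Nat.even_iff.1 hw)
  obtain ⟨l, hl, hprod, hlen⟩ := exists_Rsym_list_of_even_length cs ω heven
  refine le_antisymm (hnu ▸ hlen ▸ glen_le hl (hprod.trans hω)) ?_
  obtain ⟨l', hl', hprod', hglen⟩ := exists_list_length_eq_glen hl (hprod.trans hω)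
  obtain ⟨ω', hω', hlen'⟩ := exists_word_of_Rsym_list cs l' hl'
  exact hglen ▸ hlen' ▸ nu_le cs (hω'.trans hprod')

end Alternating

open Finset in
lemma card_filter_sub_card_filter_of_eq_off_pair {α : Type*} [Fintype α] {p q : α → Prop}
    [DecidablePred p] [DecidablePred q] {a b : α} (hab : a ≠ b)
    (h : ∀ x, x ≠ a → x ≠ b → (p x ↔ q x)) :
    (#{x | p x} : ℤ) - #{x | q x} =
      ((if p a then 1 else 0) - if q a then 1 else 0) +
        ((if p b then 1 else 0) - if q b then 1 else 0) := by
  rw [natCast_card_filter, natCast_card_filter, ← sum_sub_distrib]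
  exact Fintype.sum_eq_add a b hab fun x ⟨ha, hb⟩ => by simp [h x ha hb]

section Perm

variable {m : ℕ} (w : Equiv.Perm (Fin (m + 1))) (i : Fin m)

lemma invNum_one : invNum (1 : Equiv.Perm (Fin (m + 1))) = 0 :=
  Finset.card_eq_zero.2 (Finset.filter_eq_empty_iff.2 fun _ _ h => lt_asymm h.1 h.2)

lemma lrmin_one : lrmin (1 : Equiv.Perm (Fin (m + 1))) = 0 :=
  Finset.card_eq_zero.2 (Finset.filter_eq_empty_iff.2 fun j _ h =>
    Fin.not_lt_zero j (h.2 0 (Fin.pos_of_ne_zero h.1)))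

lemma apply_castSucc_lt_or_gt : w i.castSucc < w i.succ ∨ w i.succ < w i.castSucc :=
  lt_or_gt_of_ne (w.injective.ne Fin.castSucc_lt_succ.ne)

lemma swap_apply_of_lt_castSucc {k : Fin (m + 1)} (hk : k < i.castSucc) :
    Equiv.swap i.castSucc i.succ k = k :=
  Equiv.swap_apply_of_ne_of_ne hk.ne (hk.trans Fin.castSucc_lt_succ).ne

lemma swap_lt_swap_iff {x y : Fin (m + 1)} (hab : ¬(x = i.castSucc ∧ y = i.succ))
    (hba : ¬(x = i.succ ∧ y = i.castSucc)) :
    Equiv.swap i.castSucc i.succ x < Equiv.swap i.castSucc i.succ y ↔ x < y := by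
  simp only [Equiv.swap_apply_def, Fin.ext_iff, Fin.lt_def, Fin.val_succ, Fin.val_castSucc] at *
  split_ifs <;> simp only [Fin.val_succ, Fin.val_castSucc] at * <;> omega

lemma forall_lt_mul_swap_apply_lt_iff {j : Fin (m + 1)} (hja : j ≠ i.castSucc)
    (hjb : j ≠ i.succ) :
    (∀ k < j, (w * Equiv.swap i.castSucc i.succ) j < (w * Equiv.swap i.castSucc i.succ) k) ↔
      ∀ k < j, w j < w k := by
  set σ := Equiv.swap i.castSucc i.succ
  have hσj : σ j = j := Equiv.swap_apply_of_ne_of_ne hja hjb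
  have hσlt : ∀ k, σ k < j ↔ k < j := fun k => by
    have := swap_lt_swap_iff i (x := k) (fun hk => hjb hk.2) (fun hk => hja hk.2)
    rwa [hσj] at this
  simp only [Equiv.Perm.mul_apply, hσj]
  exact σ.forall_congr fun k => imp_congr_left (hσlt k).symm

open Finset in
lemma invNum_mul_swap_of_lt (h : w i.castSucc < w i.succ) :
    invNum (w * Equiv.swap i.castSucc i.succ) = invNum w + 1 := by
  set σ := Equiv.swap i.castSucc i.succ
  -- reindexing by `σ × σ`, the inversions of `w * σ` are the pairs `(x, y)` with `σ x < σ y` and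
  -- `w y < w x`; that order on pairs agrees with `x < y` except at `(i, i+1)` and `(i+1, i)`
  have hreindex : invNum (w * σ) =
      #{p : Fin (m + 1) × Fin (m + 1) | σ p.1 < σ p.2 ∧ w p.2 < w p.1} :=
    card_equiv (σ.prodCongr σ) fun p => by
      rw [mem_filter, mem_filter]
      simp only [mem_univ, true_and, Equiv.prodCongr_apply, Prod.map, Equiv.Perm.mul_apply, σ,
        Equiv.swap_apply_self]
  have := card_filter_sub_card_filter_of_eq_off_pair
    (p := fun p : Fin (m + 1) × Fin (m + 1) => σ p.1 < σ p.2 ∧ w p.2 < w p.1)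
    (q := fun p => p.1 < p.2 ∧ w p.2 < w p.1)
    (a := (i.succ, i.castSucc)) (b := (i.castSucc, i.succ)) (by simp [Fin.ext_iff])
    (fun p hba hab => by
      rw [swap_lt_swap_iff i (fun h => hab (Prod.ext h.1 h.2)) (fun h => hba (Prod.ext h.1 h.2))])
  simp only [σ] at hreindex
  simp only [σ, Equiv.swap_apply_right, Equiv.swap_apply_left, Fin.castSucc_lt_succ_iff,
    le_refl, h, h.not_gt, (Fin.castSucc_lt_succ (i := i)).not_gt, and_self, and_true, and_false,
    if_true, if_false, sub_zero, sub_self, add_zero] at this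
  rw [hreindex]
  unfold invNum
  omega

open Finset in
lemma lrmin_mul_swap_of_lt (h : w i.castSucc < w i.succ) :
    lrmin (w * Equiv.swap i.castSucc i.succ) =
      lrmin w + if ∀ k < i.castSucc, w i.succ < w k then 1 else 0 := by
  set a := i.castSucc
  set b := i.succ
  set σ := Equiv.swap a b
  have hab : a < b := Fin.castSucc_lt_succ
  have hfix : ∀ k < a, σ k = k := fun k => swap_apply_of_lt_castSucc i
  have hlt_b : ∀ k, k < b ↔ k < a ∨ k = a := fun k => by
    rw [← Fin.le_castSucc_iff, le_iff_lt_or_eq]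
  have hpa : (∀ k < a, (w * σ) a < (w * σ) k) ↔ ∀ k < a, w b < w k :=
    forall₂_congr fun k hk => by
      simp only [Equiv.Perm.mul_apply, hfix k hk, σ, Equiv.swap_apply_left]
  have hpb : (∀ k < b, (w * σ) b < (w * σ) k) ↔ ∀ k < a, w a < w k := by
    simp only [hlt_b, or_imp, forall_and, forall_eq, Equiv.Perm.mul_apply, σ,
      Equiv.swap_apply_right, Equiv.swap_apply_left, h, and_true]
    exact forall₂_congr fun k hk => by rw [hfix k hk]
  have hqb : ¬ ∀ k < b, w b < w k := fun H => h.not_gt (H a hab)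
  have hoff : ∀ j, j ≠ a → j ≠ b →
      ((j ≠ 0 ∧ ∀ k < j, (w * σ) j < (w * σ) k) ↔ (j ≠ 0 ∧ ∀ k < j, w j < w k)) :=
    fun j hja hjb => and_congr_right fun _ => forall_lt_mul_swap_apply_lt_iff w i hja hjb
  have := card_filter_sub_card_filter_of_eq_off_pair hab.ne hoff
  have hb0 : b ≠ 0 := Fin.succ_ne_zero i
  simp only [hpa, hpb, hqb, and_false, if_false, sub_zero] at this
  simp only [eq_true hb0, true_and] at this
  unfold lrmin
  by_cases ha : a = 0
  · have hvac : ∀ {P : Fin (m + 1) → Prop}, ∀ k < a, P k := fun k hk =>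
      absurd hk (ha ▸ Fin.not_lt_zero k)
    simp only [eq_false (not_not_intro ha), false_and, if_false, sub_zero, zero_add] at this
    rw [if_pos hvac] at this ⊢
    omega
  · simp only [eq_true ha, true_and] at this
    split_ifs at this ⊢ <;> omega

lemma invNum_mul_swap_of_gt (h : w i.succ < w i.castSucc) :
    invNum w = invNum (w * Equiv.swap i.castSucc i.succ) + 1 := by
  simpa [mul_assoc] using invNum_mul_swap_of_lt (w * Equiv.swap i.castSucc i.succ) i (by simpa)

lemma lrmin_mul_swap_of_gt (h : w i.succ < w i.castSucc) :
    lrmin w = lrmin (w * Equiv.swap i.castSucc i.succ) +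
      if ∀ k < i.castSucc, w i.castSucc < w k then 1 else 0 := by
  have := lrmin_mul_swap_of_lt (w * Equiv.swap i.castSucc i.succ) i (by simpa)
  simp only [mul_assoc, Equiv.swap_mul_self, mul_one] at this
  refine this.trans (congrArg _ (if_congr (forall₂_congr fun k hk => ?_) rfl rfl))
  simp [swap_apply_of_lt_castSucc i hk]

lemma invNum_mul_swap_le : invNum (w * Equiv.swap i.castSucc i.succ) ≤ invNum w + 1 := by
  rcases apply_castSucc_lt_or_gt w i with h | h
  · exact (invNum_mul_swap_of_lt w i h).le
  · have := invNum_mul_swap_of_gt w i h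
    omega

lemma invNum_mul_swap_add_lrmin_le :
    invNum (w * Equiv.swap i.castSucc i.succ) + lrmin w ≤
      invNum w + lrmin (w * Equiv.swap i.castSucc i.succ) + 1 := by
  rcases apply_castSucc_lt_or_gt w i with h | h
  · have := invNum_mul_swap_of_lt w i h
    have := lrmin_mul_swap_of_lt w i h
    omega
  · have := invNum_mul_swap_of_gt w i h
    have := lrmin_mul_swap_of_gt w i h
    split_ifs at this <;> omega

lemma invNum_mul_swap_zero_add_lrmin (w : Equiv.Perm (Fin (m + 2))) :
    invNum (w * Equiv.swap 0 1) + lrmin w = invNum w + lrmin (w * Equiv.swap 0 1) := by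
  have hvac : ∀ {P : Fin (m + 2) → Prop}, ∀ k < (0 : Fin (m + 1)).castSucc, P k :=
    fun k hk => absurd hk (Fin.not_lt_zero k)
  rcases apply_castSucc_lt_or_gt w 0 with h | h
  · have hinv := invNum_mul_swap_of_lt w 0 h
    have hlr := lrmin_mul_swap_of_lt w 0 h
    rw [if_pos hvac] at hlr
    simp only [Fin.castSucc_zero, Fin.succ_zero_eq_one] at hinv hlr
    omega
  · have hinv := invNum_mul_swap_of_gt w 0 h
    have hlr := lrmin_mul_swap_of_gt w 0 h
    rw [if_pos hvac] at hlr
    simp only [Fin.castSucc_zero, Fin.succ_zero_eq_one] at hinv hlr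
    omega

lemma exists_descent_of_ne_one {w : Equiv.Perm (Fin (m + 2))} (hw : w ≠ 1) :
    ∃ i : Fin (m + 1), w i.succ < w i.castSucc ∧
      (i = 0 ∨ ¬ ∀ k < i.castSucc, w i.castSucc < w k) := by
  have hdesc : ∃ i : Fin (m + 1), w i.succ < w i.castSucc := by
    by_contra! H
    have hmono : StrictMono w := Fin.strictMono_iff_lt_succ.2 fun i =>
      (H i).lt_of_ne (w.injective.ne Fin.castSucc_lt_succ.ne)
    exact hw (Equiv.ext fun x => hmono.apply_eq)
  -- take the first descent `i`; if `i ≠ 0`, then `w (i - 1) < w i` since `i - 1` is no descent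
  obtain ⟨i, hi, hmin⟩ := WellFounded.has_min wellFounded_lt
    {i : Fin (m + 1) | w i.succ < w i.castSucc} hdesc
  refine ⟨i, hi, or_iff_not_imp_left.2 fun hi0 hlr => ?_⟩
  obtain ⟨j, rfl⟩ := Fin.exists_succ_eq.2 hi0
  refine hmin j.castSucc ?_ Fin.castSucc_lt_succ
  rw [Set.mem_ofPred_eq, Fin.succ_castSucc]
  exact hlr _ (Fin.castSucc_lt_castSucc_iff.2 Fin.castSucc_lt_succ)

end Perm

section SymmetricGroup

variable {M : CoxeterMatrix (Fin (n + 1))} (cs : CoxeterSystem M (Equiv.Perm (Fin (n + 2))))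
  (hs : ∀ i : Fin (n + 1), cs.simple i = Equiv.swap i.castSucc i.succ)
include hs

lemma wordProd_append_singleton (ω : List (Fin (n + 1))) (i : Fin (n + 1)) :
    cs.wordProd (ω ++ [i]) = cs.wordProd ω * Equiv.swap i.castSucc i.succ := by
  rw [cs.wordProd_append, cs.wordProd_singleton, hs]

lemma invNum_wordProd_le_length (ω : List (Fin (n + 1))) :
    invNum (cs.wordProd ω) ≤ ω.length := by
  induction ω using List.reverseRecOn with
  | nil => simp [invNum_one]
  | append_singleton ω i ih =>
    rw [wordProd_append_singleton cs hs, List.length_append, List.length_singleton]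
    exact (invNum_mul_swap_le _ i).trans (by omega)

lemma invNum_wordProd_le (ω : List (Fin (n + 1))) :
    invNum (cs.wordProd ω) ≤ (ω.filter (fun i => i ≠ 0)).length + lrmin (cs.wordProd ω) := by
  induction ω using List.reverseRecOn with
  | nil => simp [invNum_one]
  | append_singleton ω i ih =>
    rw [wordProd_append_singleton cs hs, List.filter_append, List.length_append]
    by_cases hi : i = 0
    · subst hi
      have := invNum_mul_swap_zero_add_lrmin (cs.wordProd ω)
      have h0 : ([0].filter (fun i : Fin (n + 1) => i ≠ 0)).length = 0 := by simp
      rw [Fin.castSucc_zero, Fin.succ_zero_eq_one]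
      omega
    · have := invNum_mul_swap_add_lrmin_le (cs.wordProd ω) i
      have h1 : ([i].filter (fun i : Fin (n + 1) => i ≠ 0)).length = 1 := by simp [hi]
      omega

lemma exists_word_length_eq_invNum (w : Equiv.Perm (Fin (n + 2))) :
    ∃ ω : List (Fin (n + 1)), cs.wordProd ω = w ∧ ω.length = invNum w ∧
      (ω.filter (fun i => i ≠ 0)).length + lrmin w = invNum w := by
  by_cases hw : w = 1
  · exact ⟨[], by simp [hw], by simp [hw, invNum_one], by simp [hw, invNum_one, lrmin_one]⟩
  obtain ⟨i, hi, hi0⟩ := exists_descent_of_ne_one hw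
  have hinv := invNum_mul_swap_of_gt w i hi
  have hlr := lrmin_mul_swap_of_gt w i hi
  obtain ⟨ω, hprod, hlen, hnz⟩ :=
    exists_word_length_eq_invNum (w * Equiv.swap i.castSucc i.succ)
  refine ⟨ω ++ [i], ?_, by simp [hlen, hinv], ?_⟩
  · simp [wordProd_append_singleton cs hs, hprod, mul_assoc]
  · rw [List.filter_append, List.length_append]
    rcases hi0 with rfl | hlrmin
    · have hvac : ∀ k < (0 : Fin (n + 1)).castSucc, w (Fin.castSucc 0) < w k :=
        fun k hk => absurd hk (Fin.not_lt_zero k)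
      have : ([0].filter (fun i : Fin (n + 1) => i ≠ 0)).length = 0 := by simp
      rw [if_pos hvac] at hlr
      omega
    · have hi0 : i ≠ 0 := by
        rintro rfl
        exact hlrmin fun k hk => absurd hk (Fin.not_lt_zero k)
      have : ([i].filter (fun i : Fin (n + 1) => i ≠ 0)).length = 1 := by simp [hi0]
      rw [if_neg hlrmin] at hlr
      omega
termination_by invNum w
decreasing_by omega

theorem length_eq_invNum (w : Equiv.Perm (Fin (n + 2))) : cs.length w = invNum w := by
  obtain ⟨ω, rfl, hlen, -⟩ := exists_word_length_eq_invNum cs hs w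
  obtain ⟨ω', hred, hω'⟩ := cs.exists_isReduced (cs.wordProd ω)
  refine le_antisymm (hlen ▸ cs.length_wordProd_le ω) ?_
  rw [hω', hred.eq]
  exact invNum_wordProd_le_length cs hs ω'

theorem isGreatest_count_zero_of_isReduced (w : Equiv.Perm (Fin (n + 2))) :
    IsGreatest {k | ∃ ω : List (Fin (n + 1)), cs.IsReduced ω ∧
      cs.wordProd ω = w ∧ ω.count 0 = k} (lrmin w) := by
  constructor
  · obtain ⟨ω, hω, hlen, hnz⟩ := exists_word_length_eq_invNum cs hs w
    have hcount := count_add_length_filter_ne 0 ω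
    have hred : cs.IsReduced ω := by
      rw [CoxeterSystem.IsReduced, hω, length_eq_invNum cs hs, hlen]
    exact ⟨ω, hred, hω, by omega⟩
  · rintro k ⟨ω, hred, rfl, rfl⟩
    have hinv := invNum_wordProd_le cs hs ω
    have hcount := count_add_length_filter_ne 0 ω
    rw [← length_eq_invNum cs hs, hred.eq] at hinv
    omega

theorem nu_eq_invNum_sub_lrmin (w : Equiv.Perm (Fin (n + 2))) :
    nu cs w = invNum w - lrmin w := by
  obtain ⟨ω, hω, -, hnz⟩ := exists_word_length_eq_invNum cs hs w
  obtain ⟨ω', hω', hnu⟩ := exists_word_length_filter_eq_nu cs w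
  have := nu_le cs hω
  have := invNum_wordProd_le cs hs ω'
  rw [hω'] at this
  omega

end SymmetricGroup

/-- In the symmetric group with adjacent transposition generators
(`s₀ = (1,2)`): the maximum number of occurrences of `s₀` in a reduced word for
`w` is `lrmin w`, and consequently for `w` in the alternating group,
`ℓ_{R ∪ R⁻¹}(w) = inv(w) − lrmin(w)`. -/
theorem statement2 {n : ℕ} {M : CoxeterMatrix (Fin (n + 1))}
    (cs : CoxeterSystem M (Equiv.Perm (Fin (n + 2))))
    (hs : ∀ i : Fin (n + 1), cs.simple i = Equiv.swap i.castSucc i.succ) :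
    (∀ w : Equiv.Perm (Fin (n + 2)),
      IsGreatest {k | ∃ ω : List (Fin (n + 1)), cs.IsReduced ω ∧
        cs.wordProd ω = w ∧ ω.count 0 = k} (lrmin w)) ∧
    (∀ w ∈ alt cs, glen (Rsym cs) w = invNum w - lrmin w) :=
  ⟨isGreatest_count_zero_of_isReduced cs hs,
    fun w hw => (glen_Rsym_eq_nu cs hw).trans (nu_eq_invNum_sub_lrmin cs hs w)⟩

end AltCox
end

section
/- Let (W,S) be a Coxeter system with s_0 ∈ S, and for J ⊆ S with s_0 ∈ J let τ(J) = {r_i = s_0 s_i : s_i ∈ J, s_i ≠ s_0}. Then W_J ∩ W^+ = W^+_{τ(J)}, i.e., the intersection of the standard parabolic subgroup W_J with the alternating subgroup equals the subgroup of W^+ generated by τ(J). -/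
open CoxeterSystem

namespace AltCox

variable {W : Type*} [Group W]

variable {n : ℕ} {M : CoxeterMatrix (Fin (n + 1))} (cs : CoxeterSystem M W)

/-- For `J ⊆ S` with `s₀ ∈ J`, the intersection of the standard parabolic
subgroup `W_J` with the alternating subgroup equals the subgroup of `W⁺`
generated by `τ(J) = {s₀ sᵢ : sᵢ ∈ J, sᵢ ≠ s₀}`. -/
theorem statement3 (J : Set (Fin (n + 1))) (h0 : (0 : Fin (n + 1)) ∈ J) :
    parabolic cs J ⊓ alt cs = Subgroup.closure (tauSet cs J) := by
  set K := Subgroup.closure (tauSet cs J) with hK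
  have h00 : cs.simple 0 * cs.simple 0 = 1 := cs.simple_mul_simple_self 0
  have hc : ∀ x : W, cs.simple 0 * (cs.simple 0 * x) = x := fun x => by
    rw [← mul_assoc, h00, one_mul]
  -- conjugation by s₀ preserves K
  have hconj : ∀ x ∈ K, cs.simple 0 * x * cs.simple 0 ∈ K := by
    intro x hx
    induction hx using Subgroup.closure_induction with
    | mem y hy =>
      obtain ⟨i, hiJ, hine, rfl⟩ := hy
      have : cs.simple 0 * (cs.simple 0 * cs.simple i) * cs.simple 0
          = (cs.simple 0 * cs.simple i)⁻¹ := by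
        simp [mul_assoc, cs.simple_mul_simple_self]
      rw [this]
      exact inv_mem (Subgroup.subset_closure ⟨i, hiJ, hine, rfl⟩)
    | one => simpa [h00] using one_mem K
    | mul a b ha hb iha ihb =>
      have : cs.simple 0 * (a * b) * cs.simple 0
          = (cs.simple 0 * a * cs.simple 0) * (cs.simple 0 * b * cs.simple 0) := by
        group
        rw [mul_assoc (cs.simple 0 * a) (cs.simple 0) (cs.simple 0), h00, mul_one]
      rw [this]; exact mul_mem iha ihb
    | inv a ha iha =>
      have : cs.simple 0 * a⁻¹ * cs.simple 0 = (cs.simple 0 * a * cs.simple 0)⁻¹ := by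
        simp [mul_inv_rev, cs.inv_simple, mul_assoc]
      rw [this]; exact inv_mem iha
  have hKalt : K ≤ alt cs := by
    rw [hK, Subgroup.closure_le]
    rintro x ⟨i, hiJ, hine, rfl⟩
    show Even (cs.length (cs.simple 0 * cs.simple i))
    have h := cs.length_mul_mod_two (cs.simple 0) (cs.simple i)
    rw [cs.length_simple, cs.length_simple] at h
    rw [Nat.even_iff]
    omega
  have hpar : ∀ w ∈ parabolic cs J, w ∈ K ∨ cs.simple 0 * w ∈ K := by
    intro w hw
    induction hw using Subgroup.closure_induction with
    | mem y hy =>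
      obtain ⟨i, hiJ, rfl⟩ := hy
      by_cases hi : i = 0
      · subst hi
        right
        simpa [h00] using one_mem K
      · right
        exact Subgroup.subset_closure ⟨i, hiJ, hi, rfl⟩
    | one => left; exact one_mem K
    | mul a b ha hb iha ihb =>
      rcases iha with ha' | ha' <;> rcases ihb with hb' | hb'
      · left; exact mul_mem ha' hb'
      · right
        have : cs.simple 0 * (a * b)
            = (cs.simple 0 * a * cs.simple 0) * (cs.simple 0 * b) := by
          group
          rw [mul_assoc (cs.simple 0 * a) (cs.simple 0) (cs.simple 0), h00, mul_one,
            mul_assoc]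
        rw [this]; exact mul_mem (hconj a ha') hb'
      · right
        rw [← mul_assoc]; exact mul_mem ha' hb'
      · left
        have : a * b
            = (cs.simple 0 * (cs.simple 0 * a) * cs.simple 0) * (cs.simple 0 * b) := by
          simp [mul_assoc, hc]
        rw [this]
        exact mul_mem (hconj _ ha') hb'
    | inv a ha iha =>
      rcases iha with ha' | ha'
      · left; exact inv_mem ha'
      · right
        have : cs.simple 0 * a⁻¹ = cs.simple 0 * (cs.simple 0 * a)⁻¹ * cs.simple 0 := by
          simp [mul_inv_rev, cs.inv_simple, mul_assoc, hc]
        rw [this]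
        exact hconj _ (inv_mem ha')
  apply le_antisymm
  · rintro w ⟨hwP, hwA⟩
    rcases hpar w hwP with h | h
    · exact h
    · exfalso
      have h1 : Even (cs.length (cs.simple 0 * w)) := hKalt h
      have h2 : Even (cs.length w) := hwA
      have h3 := cs.length_mul_mod_two (cs.simple 0) w
      rw [cs.length_simple] at h3
      rw [Nat.even_iff] at h1 h2
      omega
  · rw [hK, Subgroup.closure_le]
    rintro x ⟨i, hiJ, hine, rfl⟩
    refine ⟨mul_mem (Subgroup.subset_closure ⟨0, h0, rfl⟩)
        (Subgroup.subset_closure ⟨i, hiJ, rfl⟩), ?_⟩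
    show Even (cs.length (cs.simple 0 * cs.simple i))
    have h := cs.length_mul_mod_two (cs.simple 0) (cs.simple i)
    rw [cs.length_simple, cs.length_simple] at h
    rw [Nat.even_iff]
    omega

end AltCox
end

section
/- Let (W,S) be a Coxeter system with s_0 ∈ S, and let J ⊆ S with s_0 ∈ J. Every element of τ(W^J) achieves the minimum ℓ_{R∪R^{-1}}-length within its coset of W^+/W^+_{τ(J)}, where W^J denotes the set of minimum-length coset representatives for W/W_J. -/
/-!
On `W⁺` the `R ∪ R⁻¹`-length is `ν`, the least number of letters other than `s₀` in a word for
the element: a word of length `k` in `R ∪ R⁻¹` spells a word with `k` such letters, and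
conversely, reading a word for `w` from the left and pairing each letter `sᵢ ≠ s₀` with an `s₀`
into a generator `s₀ sᵢ` or `sᵢ s₀` writes `τ(w)` with `ν(w)` generators. Hence
`ℓ_{R∪R⁻¹}(τ x) ≤ ν(x)`, and as `τ(x) y ∈ x W_J` (because `s₀ ∈ J`), it suffices that `ν` is
minimal on `x W_J` at `x ∈ W^J`. Such an `x` has minimal length in `x W_J`, and if `u ∈ W_J` is
written as a shortest word in `J`, then `ℓ(x u)` is `ℓ(x)` plus its length. So stripping the
letters of `u` off `x u` from the right lowers the length at each step, and by the exchange
condition each step deletes a letter from any given word for `x u`, leaving a subword for `x`.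
The exchange condition comes from the action of `W` on `W × ZMod 2` that counts, modulo 2, the
occurrences of a reflection in right inversion sequences.
-/

open CoxeterSystem

namespace AltCox

variable {W : Type*} [Group W]

variable {n : ℕ} {M : CoxeterMatrix (Fin (n + 1))} (cs : CoxeterSystem M W)

theorem mul_mul_inv_eq_iff_eq_inv_mul_mul {G : Type*} [Group G] {a t u : G} :
    a * t * a⁻¹ = u ↔ t = a⁻¹ * u * a := by
  constructor <;> rintro rfl <;> group

section CoxeterSystem

variable {B : Type*} {M : CoxeterMatrix B} (cs : CoxeterSystem M W)

local prefix:100 "s " => cs.simple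
local prefix:100 "π " => cs.wordProd
local prefix:100 "ℓ " => cs.length

theorem _root_.CoxeterSystem.even_length_mul_simple_iff (w : W) (i : B) :
    Even (ℓ (w * s i)) ↔ ¬Even (ℓ w) := by
  rcases cs.length_mul_simple w i with h | h
  · rw [h, Nat.even_add_one]
  · rw [← h, Nat.even_add_one, not_not]

theorem _root_.CoxeterSystem.simple_mul_mul_simple_eq_iff (i : B) (t u : W) :
    s i * t * s i = u ↔ t = s i * u * s i := by
  simpa only [cs.inv_simple] using mul_mul_inv_eq_iff_eq_inv_mul_mul (a := s i) (t := t) (u := u)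

open Classical in
/-- The generator `sᵢ` of the representation of `W` on `T × {±1}` behind the exchange condition,
with the set of reflections `T` enlarged to `W` and `{±1}` written additively. -/
noncomputable def signedConjPerm (i : B) : Equiv.Perm (W × ZMod 2) :=
  Function.Involutive.toPerm (fun p => (s i * p.1 * s i, p.2 + if p.1 = s i then 1 else 0)) <| by
    rintro ⟨t, z⟩
    by_cases ht : t = s i
    · simp [ht, add_assoc, CharTwo.add_self_eq_zero]
    · simp [ht, mul_assoc, mul_eq_one_iff_eq_inv]

open Classical in
theorem signedConjPerm_apply (i : B) (t : W) (z : ZMod 2) :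
    signedConjPerm cs i (t, z) = (s i * t * s i, z + if t = s i then 1 else 0) := rfl

open Classical in
theorem signedConjPerm_mul_pow_apply (i j : B) (k : ℕ) (t : W) (z : ZMod 2) :
    ((signedConjPerm cs i * signedConjPerm cs j) ^ k) (t, z) =
      ((s i * s j) ^ k * t * ((s i * s j) ^ k)⁻¹,
        z + ∑ l ∈ Finset.range (2 * k), if t = s j * (s i * s j) ^ l then 1 else 0) := by
  have hconj : (s i * s j)⁻¹ * s j = s j * (s i * s j) := by
    rw [mul_inv_rev, cs.inv_simple, cs.inv_simple, mul_assoc]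
  induction k generalizing t z with
  | zero => simp
  | succ k ih =>
    have h1 : s j * t * s j = s i ↔ t = s j * (s i * s j) ^ 1 := by
      rw [cs.simple_mul_mul_simple_eq_iff, pow_one, mul_assoc]
    have h2 (l : ℕ) : s i * (s j * t * s j) * s i = s j * (s i * s j) ^ l ↔
        t = s j * (s i * s j) ^ (l + 2) := by
      have : s i * (s j * t * s j) * s i = s i * s j * t * (s i * s j)⁻¹ := by
        simp only [mul_inv_rev, cs.inv_simple, mul_assoc]
      have key : (s i * s j)⁻¹ * (s j * (s i * s j) ^ l) * (s i * s j) =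
          s j * (s i * s j) ^ (l + 2) := by
        rw [← mul_assoc _ (s j), hconj, mul_assoc, ← pow_succ, mul_assoc, ← pow_succ']
      rw [this, mul_mul_inv_eq_iff_eq_inv_mul_mul, key]
    rw [pow_succ, Equiv.Perm.mul_apply, Equiv.Perm.mul_apply, signedConjPerm_apply,
      signedConjPerm_apply, ih, Prod.mk.injEq]
    refine ⟨by simp only [pow_succ, mul_inv_rev, cs.inv_simple, mul_assoc], ?_⟩
    rw [Nat.mul_succ, Finset.sum_range_succ', Finset.sum_range_succ']
    simp only [h1, h2, pow_zero, mul_one]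
    abel

open Classical in
theorem isLiftable_signedConjPerm : M.IsLiftable (signedConjPerm cs) := by
  intro i j
  have hpow := cs.simple_mul_simple_pow i j
  generalize M i j = m at hpow ⊢
  ext ⟨t, z⟩ : 1
  have hper (l : ℕ) : (s i * s j) ^ (m + l) = (s i * s j) ^ l := by
    rw [pow_add, hpow, one_mul]
  rw [signedConjPerm_mul_pow_apply, hpow, two_mul, Finset.sum_range_add]
  simp only [hper, CharTwo.add_self_eq_zero, add_zero]
  simp

noncomputable def signedConj : W →* Equiv.Perm (W × ZMod 2) :=
  cs.lift ⟨signedConjPerm cs, isLiftable_signedConjPerm cs⟩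

open Classical in
theorem signedConj_wordProd (ω : List B) (t : W) (z : ZMod 2) :
    signedConj cs (π ω) (t, z) =
      (π ω * t * (π ω)⁻¹, z + ((cs.rightInvSeq ω).count t : ZMod 2)) := by
  induction ω generalizing z with
  | nil => simp
  | cons i ω ih =>
    rw [cs.wordProd_cons, map_mul, Equiv.Perm.mul_apply, ih, signedConj,
      cs.lift_apply_simple, signedConjPerm_apply, CoxeterSystem.rightInvSeq, List.count_cons,
      mul_mul_inv_eq_iff_eq_inv_mul_mul]
    simp only [mul_inv_rev, cs.inv_simple, mul_assoc, beq_iff_eq, Nat.cast_add, Nat.cast_ite,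
      Nat.cast_one, Nat.cast_zero, add_assoc, @eq_comm _ t]

open Classical in
theorem count_rightInvSeq_cast_eq {ω ω' : List B} (h : π ω = π ω') (t : W) :
    ((cs.rightInvSeq ω).count t : ZMod 2) = (cs.rightInvSeq ω').count t := by
  have := congrArg (fun w => (signedConj cs w (t, 0)).2) h
  simpa only [signedConj_wordProd, zero_add] using this

theorem _root_.CoxeterSystem.exists_wordProd_eraseIdx_eq_mul_simple {ω : List B} {i : B}
    (h : ℓ (π ω * s i) < ℓ (π ω)) : ∃ j < ω.length, π (ω.eraseIdx j) = π ω * s i := by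
  classical
  obtain ⟨ω', hω', heq⟩ := cs.exists_isReduced (π ω * s i)
  have hprod : π ω = π (ω'.concat i) := by
    rw [cs.wordProd_concat, ← heq, cs.simple_mul_simple_cancel_right]
  have hnotmem : s i ∉ cs.rightInvSeq ω' := fun hmem => by
    have := (cs.isRightInversion_of_mem_rightInvSeq hω' hmem).2
    rw [← heq, cs.simple_mul_simple_cancel_right] at this
    omega
  have hcount : (cs.rightInvSeq (ω'.concat i)).count (s i) = 1 := by
    have hmap := List.count_map_of_injective (cs.rightInvSeq ω') _
      (MulAut.conj (s i)).injective (s i)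
    rw [show MulAut.conj (s i) (s i) = s i by simp] at hmap
    rw [cs.rightInvSeq_concat, List.concat_eq_append, List.count_append, hmap,
      List.count_eq_zero_of_not_mem hnotmem]
    simp
  have hmem : s i ∈ cs.rightInvSeq ω := by
    have := count_rightInvSeq_cast_eq cs hprod (s i)
    rw [hcount, Nat.cast_one] at this
    refine List.count_pos_iff.mp (Nat.pos_of_ne_zero fun h0 => ?_)
    simp [h0] at this
  obtain ⟨j, hj, hji⟩ := List.mem_iff_getElem.mp hmem
  refine ⟨j, by simpa using hj, ?_⟩
  rw [← cs.wordProd_mul_getD_rightInvSeq, List.getD_eq_getElem _ _ hj, hji]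

end CoxeterSystem

theorem glen_prod_le_length {A : Set W} {l : List W} (hl : ∀ g ∈ l, g ∈ A) :
    glen A l.prod ≤ l.length :=
  Nat.sInf_le ⟨l, hl, rfl, rfl⟩

theorem exists_prod_eq_length_eq_glen {A : Set W} {w : W}
    (h : ∃ l : List W, (∀ g ∈ l, g ∈ A) ∧ l.prod = w) :
    ∃ l : List W, (∀ g ∈ l, g ∈ A) ∧ l.prod = w ∧ l.length = glen A w := by
  obtain ⟨l, hl, rfl⟩ := h
  have hne : {k | ∃ l' : List W, (∀ g ∈ l', g ∈ A) ∧ l'.prod = l.prod ∧ l'.length = k}.Nonempty :=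
    ⟨_, l, hl, rfl, rfl⟩
  exact Nat.sInf_mem hne

local prefix:100 "s " => cs.simple
local prefix:100 "π " => cs.wordProd
local prefix:100 "ℓ " => cs.length

section MinimalCosetRepresentatives

variable {J : Set (Fin (n + 1))}

theorem simple_mem_parabolic {i : Fin (n + 1)} (hi : i ∈ J) : s i ∈ parabolic cs J :=
  Subgroup.subset_closure ⟨i, hi, rfl⟩

theorem wordProd_mem_parabolic {υ : List (Fin (n + 1))} (hυ : ∀ i ∈ υ, i ∈ J) :
    π υ ∈ parabolic cs J :=
  list_prod_mem fun _ hg => by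
    obtain ⟨i, hi, rfl⟩ := List.mem_map.mp hg
    exact simple_mem_parabolic cs (hυ i hi)

theorem exists_wordProd_eq_of_mem_parabolic {u : W} (hu : u ∈ parabolic cs J) :
    ∃ υ : List (Fin (n + 1)), (∀ i ∈ υ, i ∈ J) ∧ π υ = u := by
  induction hu using Subgroup.closure_induction with
  | mem _ hg =>
    obtain ⟨i, hi, rfl⟩ := hg
    exact ⟨[i], by simpa using hi, cs.wordProd_singleton i⟩
  | one => exact ⟨[], by simp, cs.wordProd_nil⟩
  | mul _ _ _ _ ih₁ ih₂ =>
    obtain ⟨υ₁, h₁, rfl⟩ := ih₁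
    obtain ⟨υ₂, h₂, rfl⟩ := ih₂
    exact ⟨υ₁ ++ υ₂, by simpa [or_imp, forall_and] using And.intro h₁ h₂,
      cs.wordProd_append υ₁ υ₂⟩
  | inv _ _ ih =>
    obtain ⟨υ, h, rfl⟩ := ih
    exact ⟨υ.reverse, by simpa using h, cs.wordProd_reverse υ⟩

def IsShortestWordIn (J : Set (Fin (n + 1))) (υ : List (Fin (n + 1))) : Prop :=
  (∀ i ∈ υ, i ∈ J) ∧
    ∀ υ' : List (Fin (n + 1)), (∀ i ∈ υ', i ∈ J) → π υ' = π υ → υ.length ≤ υ'.length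

theorem exists_isShortestWordIn {u : W} (hu : u ∈ parabolic cs J) :
    ∃ υ, IsShortestWordIn cs J υ ∧ π υ = u := by
  obtain ⟨υ, ⟨hJ, hυ⟩, hmin⟩ := exists_minimalFor_of_wellFoundedLT
    (fun υ => (∀ i ∈ υ, i ∈ J) ∧ π υ = u) List.length
    (exists_wordProd_eq_of_mem_parabolic cs hu)
  refine ⟨υ, ⟨hJ, fun υ' hJ' h => ?_⟩, hυ⟩
  by_contra! hlt
  exact hlt.not_ge (hmin ⟨hJ', h.trans hυ⟩ hlt.le)

theorem IsShortestWordIn.dropLast {υ : List (Fin (n + 1))} {i : Fin (n + 1)}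
    (h : IsShortestWordIn cs J (υ ++ [i])) : IsShortestWordIn cs J υ ∧ i ∈ J := by
  refine ⟨⟨fun k hk => h.1 k (List.mem_append_left _ hk), fun υ' hJ' hυ' => ?_⟩,
    h.1 i (by simp)⟩
  have := h.2 (υ' ++ [i]) (by simpa [or_imp, forall_and] using And.intro hJ' (h.1 i (by simp)))
    (by rw [cs.wordProd_append, cs.wordProd_append, hυ'])
  simpa using this

theorem lt_length_mul_wordProd_mul_simple {x : W}
    (hx : ∀ u ∈ parabolic cs J, ℓ x ≤ ℓ (x * u)) {υ : List (Fin (n + 1))} {i : Fin (n + 1)}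
    (hυ : IsShortestWordIn cs J (υ ++ [i])) (hadd : ℓ (x * π υ) = ℓ x + υ.length) :
    ℓ (x * π υ) < ℓ (x * π υ * s i) := by
  by_contra! hle
  obtain ⟨ωx, hωx, rfl⟩ := cs.exists_isReduced x
  have hlt : ℓ (π (ωx ++ υ) * s i) < ℓ (π (ωx ++ υ)) := by
    rw [cs.wordProd_append]
    exact hle.lt_of_ne (cs.length_mul_simple_ne _ i)
  obtain ⟨j, hj, hje⟩ := cs.exists_wordProd_eraseIdx_eq_mul_simple hlt
  rcases lt_or_ge j ωx.length with hjx | hjx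
  · -- deleting a letter of `x` would give a shorter element of `x W_J`
    rw [List.eraseIdx_append_of_lt_length hjx, cs.wordProd_append, cs.wordProd_append] at hje
    have hmem : π (υ ++ [i]) * (π υ)⁻¹ ∈ parabolic cs J :=
      mul_mem (wordProd_mem_parabolic cs hυ.1)
        (inv_mem (wordProd_mem_parabolic cs hυ.dropLast.1.1))
    have heq : π (ωx.eraseIdx j) = π ωx * (π (υ ++ [i]) * (π υ)⁻¹) := by
      rw [eq_mul_inv_of_mul_eq hje, cs.wordProd_append, cs.wordProd_singleton]
      group
    have hmin := hx _ hmem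
    rw [← heq] at hmin
    have hshort := cs.length_wordProd_le (ωx.eraseIdx j)
    have hlen := List.length_eraseIdx_add_one hjx
    have hred : ℓ (π ωx) = ωx.length := hωx
    omega
  · -- deleting a letter of `υ` would give a shorter word in `J` for `π (υ ++ [i])`
    rw [List.eraseIdx_append_of_length_le hjx, cs.wordProd_append, cs.wordProd_append,
      mul_assoc] at hje
    have hshort := hυ.2 (υ.eraseIdx (j - ωx.length))
      (fun k hk => hυ.dropLast.1.1 k (List.mem_of_mem_eraseIdx hk))
      (by rw [mul_left_cancel hje, cs.wordProd_append, cs.wordProd_singleton])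
    have hlen := List.length_eraseIdx_le υ (j - ωx.length)
    simp only [List.length_append, List.length_singleton] at hshort
    omega

theorem length_mul_wordProd {x : W} (hx : ∀ u ∈ parabolic cs J, ℓ x ≤ ℓ (x * u))
    {υ : List (Fin (n + 1))} (hυ : IsShortestWordIn cs J υ) :
    ℓ (x * π υ) = ℓ x + υ.length := by
  induction υ using List.reverseRecOn with
  | nil => simp
  | append_singleton υ i ih =>
    have hadd := ih hυ.dropLast.1
    have hlt := lt_length_mul_wordProd_mul_simple cs hx hυ hadd
    rw [cs.wordProd_append, cs.wordProd_singleton, ← mul_assoc, List.length_append,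
      List.length_singleton]
    rcases cs.length_mul_simple (x * π υ) i with h | h <;> omega

theorem length_le_length_mul_of_mem_minReps {x : W} (hx : x ∈ minReps cs J) {u : W}
    (hu : u ∈ parabolic cs J) : ℓ x ≤ ℓ (x * u) := by
  obtain ⟨v, hv, hvmin⟩ := exists_minimalFor_of_wellFoundedLT
    (· ∈ parabolic cs J) (fun v => ℓ (x * v)) ⟨1, one_mem _⟩
  have hmin : ∀ w ∈ parabolic cs J, ℓ (x * v) ≤ ℓ (x * w) := fun w hw =>
    (le_total (ℓ (x * w)) (ℓ (x * v))).elim (hvmin hw) id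
  have hxv : ∀ w ∈ parabolic cs J, ℓ (x * v) ≤ ℓ (x * v * w) := fun w hw => by
    rw [mul_assoc]
    exact hmin _ (mul_mem hv hw)
  -- `x = (x v) v⁻¹`, and a last letter of a shortest word for `v⁻¹` would be a descent of `x`
  obtain ⟨υ, hυ, hυv⟩ := exists_isShortestWordIn cs (inv_mem hv)
  have hadd := length_mul_wordProd cs hxv hυ
  rw [hυv, mul_inv_cancel_right] at hadd
  rcases υ.eq_nil_or_concat' with rfl | ⟨υ', i, rfl⟩
  · rw [hadd, List.length_nil, add_zero]
    exact hmin u hu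
  · obtain ⟨hυ', hi⟩ := hυ.dropLast
    have hdesc := length_mul_wordProd cs hxv hυ'
    have hxi : x * v * π υ' = x * s i := by
      rw [← inv_inv v, ← hυv, cs.wordProd_append, cs.wordProd_singleton, mul_inv_rev,
        cs.inv_simple]
      group
    have := hx i hi
    rw [hxi] at hdesc
    simp only [List.length_append, List.length_singleton] at hadd
    omega

theorem exists_sublist_wordProd_eq {x : W} (hx : ∀ u ∈ parabolic cs J, ℓ x ≤ ℓ (x * u))
    {υ : List (Fin (n + 1))} (hυ : IsShortestWordIn cs J υ) {ω : List (Fin (n + 1))}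
    (hω : π ω = x * π υ) : ∃ ω' : List (Fin (n + 1)), ω'.Sublist ω ∧ π ω' = x := by
  induction υ using List.reverseRecOn generalizing ω with
  | nil => exact ⟨ω, List.Sublist.refl ω, by simpa using hω⟩
  | append_singleton υ i ih =>
    obtain ⟨hυ', -⟩ := hυ.dropLast
    have hω' : π ω * s i = x * π υ := by
      rw [hω, cs.wordProd_append, cs.wordProd_singleton, ← mul_assoc,
        cs.simple_mul_simple_cancel_right]
    have hlt : ℓ (π ω * s i) < ℓ (π ω) := by
      rw [hω', hω, cs.wordProd_append, cs.wordProd_singleton, ← mul_assoc]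
      exact lt_length_mul_wordProd_mul_simple cs hx hυ (length_mul_wordProd cs hx hυ')
    obtain ⟨j, -, hj⟩ := cs.exists_wordProd_eraseIdx_eq_mul_simple hlt
    obtain ⟨ω', hsub, hω'x⟩ := ih hυ' (hj.trans hω')
    exact ⟨ω', hsub.trans (ω.eraseIdx_sublist j), hω'x⟩

end MinimalCosetRepresentatives

section Nu

theorem nu_wordProd_le (ω : List (Fin (n + 1))) :
    nu cs (π ω) ≤ (ω.filter (· ≠ 0)).length :=
  Nat.sInf_le ⟨ω, rfl, rfl⟩

theorem exists_wordProd_eq_nu (w : W) :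
    ∃ ω : List (Fin (n + 1)), π ω = w ∧ (ω.filter (· ≠ 0)).length = nu cs w := by
  obtain ⟨ω, rfl⟩ := cs.wordProd_surjective w
  have hne : {k | ∃ ω' : List (Fin (n + 1)), π ω' = π ω ∧
      (ω'.filter (· ≠ 0)).length = k}.Nonempty :=
    ⟨_, ω, rfl, rfl⟩
  exact Nat.sInf_mem hne

theorem nu_le_nu_mul_of_mem_minReps {J : Set (Fin (n + 1))} {x : W} (hx : x ∈ minReps cs J)
    {u : W} (hu : u ∈ parabolic cs J) : nu cs x ≤ nu cs (x * u) := by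
  obtain ⟨ω, hω, hνω⟩ := exists_wordProd_eq_nu cs (x * u)
  obtain ⟨υ, hυ, rfl⟩ := exists_isShortestWordIn cs hu
  obtain ⟨ω', hsub, rfl⟩ := exists_sublist_wordProd_eq cs
    (fun _ => length_le_length_mul_of_mem_minReps cs hx) hυ hω
  exact (nu_wordProd_le cs ω').trans (hνω ▸ (hsub.filter _).length_le)

theorem mem_Rsym_iff {g : W} : g ∈ Rsym cs ↔ ∃ i ≠ 0, g = s 0 * s i ∨ g = s i * s 0 := by
  simp only [Rsym, Rset, Set.mem_union, Set.mem_inv, Set.mem_ofPred_eq, inv_eq_iff_eq_inv,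
    mul_inv_rev, cs.inv_simple]
  grind

theorem nu_mul_le_of_mem_Rsym {g : W} (hg : g ∈ Rsym cs) (w : W) :
    nu cs (g * w) ≤ nu cs w + 1 := by
  obtain ⟨ω, rfl, hω⟩ := exists_wordProd_eq_nu cs w
  obtain ⟨i, hi, rfl | rfl⟩ := (mem_Rsym_iff cs).mp hg
  · rw [← hω]
    simpa [cs.wordProd_cons, List.filter_cons, hi, mul_assoc] using nu_wordProd_le cs (0 :: i :: ω)
  · rw [← hω]
    simpa [cs.wordProd_cons, List.filter_cons, hi, mul_assoc] using nu_wordProd_le cs (i :: 0 :: ω)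

theorem nu_prod_le_length {l : List W} (hl : ∀ g ∈ l, g ∈ Rsym cs) : nu cs l.prod ≤ l.length := by
  induction l with
  | nil => simpa using nu_wordProd_le cs []
  | cons g l ih =>
    rw [List.prod_cons, List.length_cons]
    exact (nu_mul_le_of_mem_Rsym cs (hl g (by simp)) _).trans
      (by simpa using ih fun x hx => hl x (by simp [hx]))

end Nu

section Tau

theorem tau_of_even {w : W} (h : Even (ℓ w)) : tau cs w = w := if_pos h

theorem tau_of_not_even {w : W} (h : ¬Even (ℓ w)) : tau cs w = w * s 0 := if_neg h

theorem tau_mem_alt (w : W) : tau cs w ∈ alt cs := by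
  by_cases h : Even (ℓ w)
  · rwa [tau_of_even cs h]
  · rw [tau_of_not_even cs h]
    exact (cs.even_length_mul_simple_iff w 0).mpr h

theorem tau_mul_simple_zero (w : W) : tau cs (w * s 0) = tau cs w := by
  by_cases h : Even (ℓ w)
  · rw [tau_of_not_even cs (by rwa [cs.even_length_mul_simple_iff, not_not]),
      cs.simple_mul_simple_cancel_right, tau_of_even cs h]
  · rw [tau_of_even cs ((cs.even_length_mul_simple_iff w 0).mpr h), tau_of_not_even cs h]

theorem exists_mem_Rsym_tau_mul_simple {i : Fin (n + 1)} (hi : i ≠ 0) (w : W) :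
    ∃ g ∈ Rsym cs, tau cs (w * s i) = tau cs w * g := by
  by_cases h : Even (ℓ w)
  · refine ⟨s i * s 0, (mem_Rsym_iff cs).mpr ⟨i, hi, .inr rfl⟩, ?_⟩
    rw [tau_of_not_even cs (by rwa [cs.even_length_mul_simple_iff, not_not]), tau_of_even cs h,
      mul_assoc]
  · refine ⟨s 0 * s i, (mem_Rsym_iff cs).mpr ⟨i, hi, .inl rfl⟩, ?_⟩
    rw [tau_of_even cs ((cs.even_length_mul_simple_iff w i).mpr h), tau_of_not_even cs h,
      mul_assoc, cs.simple_mul_simple_cancel_left]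

theorem exists_Rsym_prod_eq_tau_wordProd (ω : List (Fin (n + 1))) :
    ∃ l : List W, (∀ g ∈ l, g ∈ Rsym cs) ∧ l.prod = tau cs (π ω) ∧
      l.length ≤ (ω.filter (· ≠ 0)).length := by
  induction ω using List.reverseRecOn with
  | nil => exact ⟨[], by simp, by simp [tau_of_even cs], le_rfl⟩
  | append_singleton ω i ih =>
    obtain ⟨l, hl, hprod, hlen⟩ := ih
    rw [cs.wordProd_append, cs.wordProd_singleton, List.filter_append]
    by_cases hi : i = 0
    · subst hi
      exact ⟨l, hl, by rw [hprod, tau_mul_simple_zero], by simpa using hlen⟩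
    · obtain ⟨g, hg, hτ⟩ := exists_mem_Rsym_tau_mul_simple cs hi (π ω)
      refine ⟨l ++ [g], ?_, by rw [List.prod_append, hprod, hτ, List.prod_singleton], ?_⟩
      · simpa [or_imp, forall_and] using And.intro hl hg
      · simpa [hi] using hlen

theorem glen_tau_le_nu (w : W) : glen (Rsym cs) (tau cs w) ≤ nu cs w := by
  obtain ⟨ω, rfl, hω⟩ := exists_wordProd_eq_nu cs w
  obtain ⟨l, hl, hprod, hlen⟩ := exists_Rsym_prod_eq_tau_wordProd cs ω
  rw [← hprod, ← hω]
  exact (glen_prod_le_length hl).trans hlen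

theorem nu_le_glen {w : W} (hw : w ∈ alt cs) : nu cs w ≤ glen (Rsym cs) w := by
  obtain ⟨ω, rfl⟩ := cs.wordProd_surjective w
  obtain ⟨l, hl, hprod, -⟩ := exists_Rsym_prod_eq_tau_wordProd cs ω
  rw [tau_of_even cs hw] at hprod
  obtain ⟨l', hl', hprod', hlen⟩ := exists_prod_eq_length_eq_glen ⟨l, hl, hprod⟩
  rw [← hlen, ← hprod']
  exact nu_prod_le_length cs hl'

end Tau

theorem tauSet_subset_parabolic_inf_alt {J : Set (Fin (n + 1))} (h0 : (0 : Fin (n + 1)) ∈ J) :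
    tauSet cs J ⊆ (parabolic cs J ⊓ alt cs : Subgroup W) := by
  rintro _ ⟨i, hiJ, -, rfl⟩
  refine ⟨mul_mem (simple_mem_parabolic cs h0) (simple_mem_parabolic cs hiJ), ?_⟩
  show Even (ℓ (s 0 * s i))
  rw [cs.even_length_mul_simple_iff, cs.length_simple]
  decide

theorem inv_mul_tau_mem_parabolic {J : Set (Fin (n + 1))} (h0 : (0 : Fin (n + 1)) ∈ J) (x : W) :
    x⁻¹ * tau cs x ∈ parabolic cs J := by
  by_cases h : Even (ℓ x)
  · simp [tau_of_even cs h, one_mem]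
  · simpa [tau_of_not_even cs h] using simple_mem_parabolic cs h0

/-- For `J ⊆ S` with `s₀ ∈ J`, every element of `τ(W^J)` achieves the minimum
`ℓ_{R ∪ R⁻¹}`-length within its coset of `W⁺/W⁺_{τ(J)}`. -/
theorem statement7 (J : Set (Fin (n + 1))) (h0 : (0 : Fin (n + 1)) ∈ J) :
    ∀ x ∈ minReps cs J, ∀ y ∈ Subgroup.closure (tauSet cs J),
      glen (Rsym cs) (tau cs x) ≤ glen (Rsym cs) (tau cs x * y) := by
  intro x hx y hy
  obtain ⟨hyJ, hyA⟩ : y ∈ parabolic cs J ⊓ alt cs :=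
    (Subgroup.closure_le _).mpr (tauSet_subset_parabolic_inf_alt cs h0) hy
  have hv : x⁻¹ * tau cs x * y ∈ parabolic cs J :=
    mul_mem (inv_mul_tau_mem_parabolic cs h0 x) hyJ
  calc glen (Rsym cs) (tau cs x) ≤ nu cs x := glen_tau_le_nu cs x
    _ ≤ nu cs (x * (x⁻¹ * tau cs x * y)) := nu_le_nu_mul_of_mem_minReps cs hx hv
    _ = nu cs (tau cs x * y) := by group
    _ ≤ glen (Rsym cs) (tau cs x * y) := nu_le_glen cs (mul_mem (tau_mem_alt cs x) hyA)

end AltCox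
end

section
/- Let (W,S) be a Coxeter system with distinguished generator s_0. Let T̂ be the set of reflections in W that are conjugate to some s ∈ S \ {s_0}. Then the inclusion T̂ ⊆ T (the set of all reflections) is proper if and only if s_0 is evenly-laced, i.e., m_{0i} is even (or infinite) for all i ≥ 1. -/
/-!
`T̂ ⊆ T` always, and since `T̂` is closed under conjugation, equality holds exactly when
`s₀ ∈ T̂`, i.e. when `s₀` is conjugate to some `sᵢ` with `i ≠ 0`. If `m₀ᵢ = 2k + 1` is odd, the
relation `(s₀ sᵢ)^(2k+1) = 1` makes `(sᵢ s₀)ᵏ` conjugate `sᵢ` to `s₀`. If every `m₀ᵢ` is even,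
the Coxeter relations allow a character `W → {±1}` sending `s₀` to `-1` and every other `sᵢ`
to `1`, which separates `s₀` from all conjugates of the other simple reflections.
-/

open CoxeterSystem

namespace CoxeterSystem

variable {B W : Type*} [Group W] {M : CoxeterMatrix B} (cs : CoxeterSystem M W)

theorem isConj_simple_of_odd {i j : B} (h : Odd (M i j)) :
    IsConj (cs.simple j) (cs.simple i) := by
  obtain ⟨k, hk⟩ := h
  set a := cs.simple i
  set b := cs.simple j
  have hpow : (b * a) ^ (2 * k + 1) = 1 := by
    rw [← hk]; exact cs.simple_mul_simple_pow' i j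
  have hinv : ((b * a) ^ k)⁻¹ = (a * b) ^ k := by
    rw [← inv_pow, mul_inv_rev, cs.inv_simple, cs.inv_simple]
  have hsemi : b * (a * b) ^ k = (b * a) ^ k * b :=
    (SemiconjBy.pow_right (by simp only [SemiconjBy, mul_assoc]) k : SemiconjBy b _ _)
  refine isConj_iff.2 ⟨(b * a) ^ k, ?_⟩
  calc (b * a) ^ k * b * ((b * a) ^ k)⁻¹
      = (b * a) ^ (2 * k + 1) * (b * a)⁻¹ * b := by
        rw [hinv, mul_assoc, hsemi, pow_succ, mul_inv_cancel_right, two_mul, pow_add,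
          ← mul_assoc]
    _ = a := by
        rw [hpow, one_mul, mul_inv_rev, cs.inv_simple, cs.inv_simple, mul_assoc,
          cs.simple_mul_simple_self, mul_one]

theorem isLiftable_ite_neg_one [DecidableEq B] {i : B} (h : ∀ j ≠ i, Even (M i j)) :
    M.IsLiftable (fun j => if j = i then (-1 : ℤˣ) else 1) := by
  intro j j'
  by_cases hj : j = i <;> by_cases hj' : j' = i
  · simp [hj, hj']
  · simpa [hj, hj'] using (h j' hj').neg_one_pow
  · simpa [hj, hj', M.symmetric j i] using (h j hj).neg_one_pow
  · simp [hj, hj']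

theorem not_isConj_simple_of_even {i j : B} (h : ∀ j ≠ i, Even (M i j)) (hji : j ≠ i) :
    ¬IsConj (cs.simple i) (cs.simple j) := by
  classical
  intro hconj
  have hsign := (cs.lift ⟨_, isLiftable_ite_neg_one h⟩).map_isConj hconj
  rw [lift_apply_simple, lift_apply_simple, isConj_iff_eq, if_pos rfl, if_neg hji] at hsign
  exact absurd hsign (by decide)

end CoxeterSystem

namespace AltCox

variable {W : Type*} [Group W] {n : ℕ} {M : CoxeterMatrix (Fin (n + 1))}
  (cs : CoxeterSystem M W)

theorem That_subset_Tall : That cs ⊆ Tall cs := by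
  rintro t ⟨w, i, -, rfl⟩
  exact (cs.isReflection_simple i).conj w

theorem That_ssubset_Tall_iff : That cs ⊂ Tall cs ↔ cs.simple 0 ∉ That cs := by
  refine ⟨fun h hs0 => h.2 ?_, fun hs0 => ⟨That_subset_Tall cs, fun h => hs0 ?_⟩⟩
  · rintro t ⟨w, j, rfl⟩
    by_cases hj : j = 0
    · obtain ⟨u, i, hi, hu⟩ := hs0
      refine ⟨w * u, i, hi, ?_⟩
      rw [hj, hu]
      group
    · exact ⟨w, j, hj, rfl⟩
  · exact h (cs.isReflection_simple 0)

theorem simple_zero_mem_That_iff :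
    cs.simple 0 ∈ That cs ↔ ∃ i ≠ 0, IsConj (cs.simple i) (cs.simple 0) := by
  simp only [That, Set.mem_ofPred_eq, isConj_iff, eq_comm (a := cs.simple 0)]
  exact ⟨fun ⟨w, i, hi, h⟩ => ⟨i, hi, w, h⟩, fun ⟨i, hi, w, h⟩ => ⟨w, i, hi, h⟩⟩

/-- The inclusion `T̂ ⊆ T` of the reflections conjugate to some simple
reflection other than `s₀` into the set of all reflections is proper if and
only if `s₀` is evenly laced. -/
theorem statement8 : That cs ⊂ Tall cs ↔ EvenlyLaced M := by
  rw [That_ssubset_Tall_iff, simple_zero_mem_That_iff]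
  constructor
  · intro hnot i hi
    by_contra hodd
    exact hnot ⟨i, hi, cs.isConj_simple_of_odd (Nat.not_even_iff_odd.1 hodd)⟩
  · rintro hev ⟨i, hi, hconj⟩
    exact cs.not_isConj_simple_of_even hev hi hconj.symm

end AltCox
end
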